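/- arXiv:1811.06897 — 3 statements merged into one kernel-verified Lean document; each statement's English description precedes it below -/
import Mathlib

section
/- Let G = (A ∪ B, E) be a marriage instance and M a popular matching of G admitting a witness β ∈ {0, ±1}^(A ∪ B) such that β_u = 0 for every vertex u unmatched in M and β_u ∈ {+1, −1} for every vertex u matched in M. Then G_M contains no M-augmenting path; hence M is a dominant matching of G. -/
open scoped Classical

namespace PopMatch

/-- A marriage/roommates instance: a vertex set with a bipartition `A`/`B`
(ignored for roommates instances) and, for each vertex, a strict preference
list over its neighbors (most preferred first).  Adjacency is given by mutual
membership in the preference lists. -/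
structure Inst (V : Type*) where
  A : Finset V
  B : Finset V
  plist : V → List V

namespace Inst

variable {V : Type*} [DecidableEq V] [Fintype V]

/-- `u` and `v` are adjacent. -/
def adj (I : Inst V) (u v : V) : Prop := v ∈ I.plist u ∧ u ∈ I.plist v

/-- `u` (strictly) prefers `v` to `w`. -/
def pref (I : Inst V) (u v w : V) : Prop :=
  v ∈ I.plist u ∧ w ∈ I.plist u ∧ (I.plist u).idxOf v < (I.plist u).idxOf w

/-- Well-formedness of an instance as a marriage instance: preference lists are
duplicate-free and symmetric, and the graph is bipartite with parts `A`, `B`. -/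
def IsValid (I : Inst V) : Prop :=
  (∀ v, (I.plist v).Nodup) ∧
  (∀ u v, v ∈ I.plist u ↔ u ∈ I.plist v) ∧
  Disjoint I.A I.B ∧
  (∀ v : V, v ∈ I.A ∨ v ∈ I.B) ∧
  (∀ u v, v ∈ I.plist u → ((u ∈ I.A ∧ v ∈ I.B) ∨ (u ∈ I.B ∧ v ∈ I.A)))

/-- A matching, encoded by its partner function. -/
def IsMatching (I : Inst V) (p : V → Option V) : Prop :=
  (∀ u v, p u = some v → p v = some u) ∧ (∀ u v, p u = some v → I.adj u v)

/-- The number of matched vertices (twice the number of edges of the matching). -/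
def msize (p : V → Option V) : ℕ := (Finset.univ.filter fun u => (p u).isSome).card

/-- Vertex `u` prefers matching `p` to matching `q`. -/
def PrefM (I : Inst V) (p q : V → Option V) (u : V) : Prop :=
  match p u, q u with
  | some _, none => True
  | some v, some w => I.pref u v w
  | none, _ => False

/-- `phi p q` = number of vertices preferring `p` to `q`. -/
noncomputable def phi (I : Inst V) (p q : V → Option V) : ℕ :=
  (Finset.univ.filter fun u => I.PrefM p q u).card

/-- `delta p q = phi p q - phi q p`. -/
noncomputable def delta (I : Inst V) (p q : V → Option V) : ℤ :=
  (I.phi p q : ℤ) - (I.phi q p : ℤ)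

/-- A popular matching: it never loses a head-to-head election. -/
def Popular (I : Inst V) (p : V → Option V) : Prop :=
  I.IsMatching p ∧ ∀ q, I.IsMatching q → 0 ≤ I.delta p q

/-- A dominant matching: a popular matching that beats every larger matching. -/
def Dominant (I : Inst V) (p : V → Option V) : Prop :=
  I.Popular p ∧ ∀ q, I.IsMatching q → msize p < msize q → 0 < I.delta p q

/-- A maximum-size popular matching. -/
def MaxPopular (I : Inst V) (p : V → Option V) : Prop :=
  I.Popular p ∧ ∀ q, I.Popular q → msize q ≤ msize p

/-- A minimum-size popular matching. -/
def MinPopular (I : Inst V) (p : V → Option V) : Prop :=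
  I.Popular p ∧ ∀ q, I.Popular q → msize p ≤ msize q

/-- `u` prefers `v` to its situation in the matching `p`
(an unmatched vertex prefers any neighbor to being unmatched). -/
def PrefOver (I : Inst V) (p : V → Option V) (u v : V) : Prop :=
  match p u with
  | none => True
  | some w => I.pref u v w

/-- The edge `(u,v)` blocks the matching `p`. -/
def Blocks (I : Inst V) (p : V → Option V) (u v : V) : Prop :=
  I.adj u v ∧ p u ≠ some v ∧ I.PrefOver p u v ∧ I.PrefOver p v u

/-- A stable matching: a matching with no blocking edge. -/
def Stable (I : Inst V) (p : V → Option V) : Prop :=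
  I.IsMatching p ∧ ∀ u v, ¬ I.Blocks p u v

/-- Adjacency in the subgraph `G_M` obtained by deleting the edges
labeled `(-,-)` with respect to the matching `p`. -/
def GMAdj (I : Inst V) (p : V → Option V) (u v : V) : Prop :=
  I.adj u v ∧ (p u = some v ∨ I.PrefOver p u v ∨ I.PrefOver p v u)

/-- `f 0, f 1, …, f n` is an augmenting path with respect to the matching `p`
inside the subgraph `G_M`: an odd number `n` of edges, alternately outside and
inside `p`, with both endpoints unmatched. -/
def IsAugPath (I : Inst V) (p : V → Option V) (n : ℕ) (f : ℕ → V) : Prop :=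
  n % 2 = 1 ∧
  (∀ i j, i ≤ n → j ≤ n → f i = f j → i = j) ∧
  (∀ i, i < n → I.GMAdj p (f i) (f (i + 1))) ∧
  (∀ i, i < n → (p (f i) = some (f (i + 1)) ↔ i % 2 = 1)) ∧
  p (f 0) = none ∧ p (f n) = none

/-- `G_M` contains an augmenting path with respect to `p`. -/
def HasAugPath (I : Inst V) (p : V → Option V) : Prop := ∃ n f, I.IsAugPath p n f

/-- `u` prefers its situation in the matching `p` to `v`. -/
def PrefSit (I : Inst V) (p : V → Option V) (u v : V) : Prop :=
  match p u with
  | none => False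
  | some w => I.pref u w v

/-- The weight `wt_p(u,v)` of an edge: `2` for a blocking edge, `-2` for a
`(-,-)` edge, `0` otherwise. -/
noncomputable def wtE (I : Inst V) (p : V → Option V) (u v : V) : ℤ :=
  if I.PrefOver p u v ∧ I.PrefOver p v u then 2
  else if I.PrefSit p u v ∧ I.PrefSit p v u then -2 else 0

/-- The weight `wt_p(u,u)` of a self-loop. -/
def wtSelf (p : V → Option V) (u : V) : ℤ := if p u = none then 0 else -1

/-- A witness (dual certificate) for the popularity of the matching `p`. -/
def IsWitness (I : Inst V) (p : V → Option V) (α : V → ℤ) : Prop :=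
  (∀ u, α u = 0 ∨ α u = 1 ∨ α u = -1) ∧
  (∑ u : V, α u) = 0 ∧
  (∀ u v, I.adj u v → I.wtE p u v ≤ α u + α v) ∧
  (∀ u : V, wtSelf p u ≤ α u)

end Inst

end PopMatch

/-!
A witness `β` is a dual certificate: summing the witness inequalities over the edges of any
matching `q` (and the self-loops of its unmatched vertices) bounds `2 Δ(q, p)` by `2 ∑ β = 0`.
For `q = p` the bound is tight, so by complementary slackness `β` vanishes on unmatched vertices
and sums to `0` along every edge of `p`.

If `q` is larger than `p`, some edge `(a, v)` of `q` covers a vertex `a` left unmatched by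
`p`; then `β a = 0`, `v` is matched with `β v = ±1`, and `wt(a, v) ∈ {0, 2}` is even, so this
edge has positive slack and `Δ(q, p) < 0`.

Along an augmenting path `f 0, …, f n` in `G_M` every edge has nonnegative weight, so the
`β`-values are forced: `β (f (2i+1)) = 1` and `β (f (2i+2)) = -1`. The last edge then joins a
vertex with `β = -1`, or an unmatched one, to the unmatched endpoint `f n`, contradicting the
witness inequality.
-/

namespace PopMatch

namespace Inst

variable {V : Type*}

section Preferences

variable [DecidableEq V] (I : Inst V) {p : V → Option V} {u v w : V}

theorem pref_irrefl (u v : V) : ¬ I.pref u v v := fun h => lt_irrefl _ h.2.2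

theorem pref_asymm (h : I.pref u v w) : ¬ I.pref u w v := fun h' => lt_asymm h.2.2 h'.2.2

theorem pref_trichotomy (hv : v ∈ I.plist u) (hw : w ∈ I.plist u) :
    v = w ∨ I.pref u v w ∨ I.pref u w v := by
  rcases lt_trichotomy ((I.plist u).idxOf v) ((I.plist u).idxOf w) with h | h | h
  · exact Or.inr (Or.inl ⟨hv, hw, h⟩)
  · exact Or.inl ((List.idxOf_inj hv).1 h)
  · exact Or.inr (Or.inr ⟨hw, hv, h⟩)

theorem prefOver_of_eq_none (h : p u = none) (v : V) : I.PrefOver p u v := by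
  simp [PrefOver, h]

theorem prefOver_iff_of_eq_some (h : p u = some w) : I.PrefOver p u v ↔ I.pref u v w := by
  simp [PrefOver, h]

theorem not_prefSit_of_eq_none (h : p u = none) (v : V) : ¬ I.PrefSit p u v := by
  simp [PrefSit, h]

theorem prefSit_iff_of_eq_some (h : p u = some w) : I.PrefSit p u v ↔ I.pref u w v := by
  simp [PrefSit, h]

theorem not_prefSit_of_prefOver (h : I.PrefOver p u v) : ¬ I.PrefSit p u v := by
  cases hpu : p u with
  | none => exact I.not_prefSit_of_eq_none hpu v
  | some w =>
    rw [I.prefSit_iff_of_eq_some hpu]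
    exact I.pref_asymm ((I.prefOver_iff_of_eq_some hpu).1 h)

theorem not_prefOver_of_prefSit (h : I.PrefSit p u v) : ¬ I.PrefOver p u v :=
  fun h' => I.not_prefSit_of_prefOver h' h

theorem prefOver_or_prefSit (hp : I.IsMatching p) (hv : v ∈ I.plist u) (hpu : p u ≠ some v) :
    I.PrefOver p u v ∨ I.PrefSit p u v := by
  cases h : p u with
  | none => exact Or.inl (I.prefOver_of_eq_none h v)
  | some w =>
    rw [I.prefOver_iff_of_eq_some h, I.prefSit_iff_of_eq_some h]
    rcases I.pref_trichotomy hv (hp.2 u w h).1 with rfl | hvw | hwv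
    · exact absurd h hpu
    · exact Or.inl hvw
    · exact Or.inr hwv

end Preferences

section Weights

variable [DecidableEq V] (I : Inst V) {p : V → Option V} {u v : V}

theorem wtE_of_eq_some (h : p u = some v) : I.wtE p u v = 0 := by
  have hover : ¬ I.PrefOver p u v := by
    rw [I.prefOver_iff_of_eq_some h]; exact I.pref_irrefl u v
  have hsit : ¬ I.PrefSit p u v := by
    rw [I.prefSit_iff_of_eq_some h]; exact I.pref_irrefl u v
  simp [wtE, hover, hsit]

theorem wtE_of_eq_none_of_eq_none (hu : p u = none) (hv : p v = none) : I.wtE p u v = 2 := by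
  simp [wtE, I.prefOver_of_eq_none hu, I.prefOver_of_eq_none hv]

theorem wtE_eq_zero_or_two_of_eq_none (hu : p u = none) :
    I.wtE p u v = 0 ∨ I.wtE p u v = 2 := by
  by_cases hv : I.PrefOver p v u <;>
    simp [wtE, I.prefOver_of_eq_none hu, I.not_prefSit_of_eq_none hu, hv]

theorem wtE_nonneg_of_gmAdj (h : I.GMAdj p u v) : 0 ≤ I.wtE p u v := by
  unfold wtE
  split_ifs with _ hsit
  · norm_num
  · rcases h.2 with hm | hu | hv
    · exact absurd ((I.prefSit_iff_of_eq_some hm).1 hsit.1) (I.pref_irrefl u v)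
    · exact absurd hsit.1 (I.not_prefSit_of_prefOver hu)
    · exact absurd hsit.2 (I.not_prefSit_of_prefOver hv)
  · rfl

end Weights

/-- An unmatched vertex is its own partner, which makes `partner q` an involution of `V`. -/
def partner (q : V → Option V) (u : V) : V := (q u).getD u

section Partner

variable {q : V → Option V} {u v : V}

theorem partner_of_eq_none (h : q u = none) : partner q u = u := by
  simp [partner, h]

theorem partner_of_eq_some (h : q u = some v) : partner q u = v := by
  simp [partner, h]

theorem partner_involutive (hq : ∀ u v, q u = some v → q v = some u) :
    Function.Involutive (partner q) := by
  intro u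
  cases h : q u with
  | none => rw [partner_of_eq_none h, partner_of_eq_none h]
  | some v => rw [partner_of_eq_some h, partner_of_eq_some (hq u v h)]

theorem sum_comp_partner [Fintype V] (hq : ∀ u v, q u = some v → q v = some u) (g : V → ℤ) :
    ∑ u, g (partner q u) = ∑ u, g u :=
  Equiv.sum_comp (partner_involutive hq).toPerm g

end Partner

section Votes

variable [DecidableEq V] (I : Inst V) {p q : V → Option V} {u v : V}

noncomputable def vote (q p : V → Option V) (u : V) : ℤ :=
  (if I.PrefM q p u then 1 else 0) - (if I.PrefM p q u then 1 else 0)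

theorem delta_eq_sum_vote [Fintype V] (q p : V → Option V) :
    I.delta q p = ∑ u, I.vote q p u := by
  simp only [delta, phi, vote, Finset.card_filter, Finset.sum_sub_distrib]
  push_cast
  rfl

theorem vote_self (p : V → Option V) (u : V) : I.vote p p u = 0 := by
  simp [vote]

theorem vote_of_eq_none (h : q u = none) : I.vote q p u = wtSelf p u := by
  cases hpu : p u <;> simp [vote, PrefM, wtSelf, h, hpu]

theorem vote_of_eq_some (h : q u = some v) :
    I.vote q p u = (if I.PrefOver p u v then 1 else 0) - (if I.PrefSit p u v then 1 else 0) := by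
  cases hpu : p u <;> simp [vote, PrefM, PrefOver, PrefSit, h, hpu]

theorem vote_add_vote_of_eq_some (hp : I.IsMatching p) (hq : I.IsMatching q)
    (h : q u = some v) : I.vote q p u + I.vote q p v = I.wtE p u v := by
  have hvu : q v = some u := hq.1 u v h
  rw [I.vote_of_eq_some h, I.vote_of_eq_some hvu]
  by_cases hm : p u = some v
  · have hmv : p v = some u := hp.1 u v hm
    simp [I.wtE_of_eq_some hm, I.prefOver_iff_of_eq_some hm, I.prefSit_iff_of_eq_some hm,
      I.prefOver_iff_of_eq_some hmv, I.prefSit_iff_of_eq_some hmv, I.pref_irrefl]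
  · have hmv : p v ≠ some u := fun h' => hm (hp.1 v u h')
    rcases I.prefOver_or_prefSit hp (hq.2 u v h).1 hm with hu | hu <;>
    rcases I.prefOver_or_prefSit hp (hq.2 v u hvu).1 hmv with hv | hv <;>
    simp [wtE, hu, hv, I.not_prefSit_of_prefOver, I.not_prefOver_of_prefSit]

theorem two_mul_delta_eq_sum [Fintype V] (hq : ∀ u v, q u = some v → q v = some u)
    (p : V → Option V) : 2 * I.delta q p = ∑ u, (I.vote q p u + I.vote q p (partner q u)) := by
  rw [delta_eq_sum_vote, Finset.sum_add_distrib, sum_comp_partner hq]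
  ring

theorem vote_add_vote_partner_le [Fintype V] {β : V → ℤ} (hp : I.IsMatching p)
    (hq : I.IsMatching q) (hwit : I.IsWitness p β) (u : V) :
    I.vote q p u + I.vote q p (partner q u) ≤ β u + β (partner q u) := by
  cases h : q u with
  | none =>
    rw [partner_of_eq_none h, I.vote_of_eq_none h]
    linarith [hwit.2.2.2 u]
  | some v =>
    rw [partner_of_eq_some h, I.vote_add_vote_of_eq_some hp hq h]
    exact hwit.2.2.1 u v (hq.2 u v h)

end Votes

theorem exists_eq_none_eq_some_of_msize_lt [Fintype V] {p q : V → Option V}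
    (h : msize p < msize q) : ∃ a v, p a = none ∧ q a = some v := by
  obtain ⟨a, hq, hp⟩ := Finset.exists_mem_notMem_of_card_lt_card h
  simp only [Finset.mem_filter, Finset.mem_univ, true_and, Option.not_isSome_iff_eq_none] at hq hp
  exact ⟨a, (q a).get hq, hp, by simp⟩

namespace IsWitness

variable [DecidableEq V] [Fintype V] {I : Inst V} {p q : V → Option V} {β : V → ℤ} {u v : V}

theorem sum_add_partner_eq_zero (hwit : I.IsWitness p β)
    (hq : ∀ u v, q u = some v → q v = some u) : ∑ u, (β u + β (partner q u)) = 0 := by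
  rw [Finset.sum_add_distrib, sum_comp_partner hq, hwit.2.1, add_zero]

theorem delta_neg_of_lt (hwit : I.IsWitness p β) (hp : I.IsMatching p) (hq : I.IsMatching q)
    (hu : I.vote q p u + I.vote q p (partner q u) < β u + β (partner q u)) :
    I.delta q p < 0 := by
  have hlt := Finset.sum_lt_sum (fun w _ => I.vote_add_vote_partner_le hp hq hwit w)
    ⟨u, Finset.mem_univ u, hu⟩
  rw [← I.two_mul_delta_eq_sum hq.1, hwit.sum_add_partner_eq_zero hq.1] at hlt
  linarith

theorem add_partner_eq_zero (hwit : I.IsWitness p β) (hp : I.IsMatching p) (u : V) :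
    β u + β (partner p u) = 0 := by
  have hsum :
      ∑ w, (I.vote p p w + I.vote p p (partner p w)) = ∑ w, (β w + β (partner p w)) := by
    simp only [vote_self, add_zero, Finset.sum_const_zero, hwit.sum_add_partner_eq_zero hp.1]
  have hle := fun w (_ : w ∈ Finset.univ) => I.vote_add_vote_partner_le hp hp hwit w
  have := (Finset.sum_eq_sum_iff_of_le hle).1 hsum u (Finset.mem_univ u)
  simpa only [vote_self, add_zero] using this.symm

theorem eq_zero_of_eq_none (hwit : I.IsWitness p β) (hp : I.IsMatching p) (h : p u = none) :
    β u = 0 := by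
  have := hwit.add_partner_eq_zero hp u
  rw [partner_of_eq_none h] at this
  linarith

theorem add_eq_zero_of_eq_some (hwit : I.IsWitness p β) (hp : I.IsMatching p)
    (h : p u = some v) : β u + β v = 0 := by
  simpa only [partner_of_eq_some h] using hwit.add_partner_eq_zero hp u

theorem delta_neg_of_msize_lt (hwit : I.IsWitness p β) (hp : I.IsMatching p)
    (hq : I.IsMatching q) (hβ : ∀ u, p u ≠ none → β u = 1 ∨ β u = -1)
    (hsize : msize p < msize q) : I.delta q p < 0 := by
  obtain ⟨a, v, ha, hav⟩ := exists_eq_none_eq_some_of_msize_lt hsize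
  apply hwit.delta_neg_of_lt hp hq (u := a)
  have hβa := hwit.eq_zero_of_eq_none hp ha
  have hwt := hwit.2.2.1 a v (hq.2 a v hav)
  rw [hβa] at hwt
  rw [partner_of_eq_some hav, I.vote_add_vote_of_eq_some hp hq hav, hβa]
  have hv : p v ≠ none := fun hv => by
    rw [I.wtE_of_eq_none_of_eq_none ha hv, hwit.eq_zero_of_eq_none hp hv] at hwt
    norm_num at hwt
  rcases I.wtE_eq_zero_or_two_of_eq_none (v := v) ha with h | h <;>
    rcases hβ v hv with h' | h' <;> omega

theorem neg_or_eq_none_of_isAugPath (hwit : I.IsWitness p β) (hp : I.IsMatching p)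
    (hβ : ∀ u, p u ≠ none → β u = 1 ∨ β u = -1) {n : ℕ} {f : ℕ → V}
    (hf : I.IsAugPath p n f) (k : ℕ) (hk : 2 * k < n) :
    β (f (2 * k)) < 0 ∨ p (f (2 * k)) = none := by
  induction k with
  | zero => exact Or.inr hf.2.2.2.2.1
  | succ k ih =>
    have hm : p (f (2 * k + 1)) = some (f (2 * k + 2)) := (hf.2.2.2.1 _ (by omega)).2 (by omega)
    have hle : β (f (2 * k)) ≤ 0 := by
      rcases ih (by omega) with h | h
      · exact h.le
      · exact (hwit.eq_zero_of_eq_none hp h).le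
    have hgm := hf.2.2.1 (2 * k) (by omega)
    have hge := (I.wtE_nonneg_of_gmAdj hgm).trans (hwit.2.2.1 _ _ hgm.1)
    have hpair := hwit.add_eq_zero_of_eq_some hp hm
    rcases hβ (f (2 * k + 1)) (by simp [hm]) with h | h
    · left; rw [show 2 * (k + 1) = 2 * k + 2 by ring]; linarith
    · linarith

theorem not_isAugPath (hwit : I.IsWitness p β) (hp : I.IsMatching p)
    (hβ : ∀ u, p u ≠ none → β u = 1 ∨ β u = -1) (n : ℕ) (f : ℕ → V) :
    ¬ I.IsAugPath p n f := by
  intro hf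
  obtain ⟨k, rfl⟩ : ∃ k, n = 2 * k + 1 := ⟨n / 2, by have := hf.1; omega⟩
  have hlast := hf.2.2.1 (2 * k) (by omega)
  have hwt := hwit.2.2.1 _ _ hlast.1
  have hend := hf.2.2.2.2.2
  rw [hwit.eq_zero_of_eq_none hp hend] at hwt
  rcases hwit.neg_or_eq_none_of_isAugPath hp hβ hf k (by omega) with h | h
  · linarith [I.wtE_nonneg_of_gmAdj hlast]
  · rw [I.wtE_of_eq_none_of_eq_none h hend, hwit.eq_zero_of_eq_none hp h] at hwt
    norm_num at hwt

end IsWitness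

end Inst

theorem witness_pm_one_implies_dominant_general
    {V : Type*} [DecidableEq V] [Fintype V] (I : Inst V)
    (p : V → Option V) (β : V → ℤ)
    (hpop : I.Popular p) (hwit : I.IsWitness p β)
    (h1 : ∀ u, p u ≠ none → β u = 1 ∨ β u = -1) :
    ¬ I.HasAugPath p ∧ I.Dominant p := by
  refine ⟨fun ⟨n, f, hf⟩ => hwit.not_isAugPath hpop.1 h1 n f hf, hpop, fun q hq hsize => ?_⟩
  have hlt := hwit.delta_neg_of_msize_lt hpop.1 hq h1 hsize
  have hswap : I.delta p q = -I.delta q p := by simp [Inst.delta]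
  linarith

/-- A popular matching with a witness `β ∈ {0,±1}^V` that is
`0` exactly on unmatched vertices and `±1` on matched vertices admits no
augmenting path in `G_M`; hence it is dominant. -/
theorem witness_pm_one_implies_dominant
    {V : Type*} [DecidableEq V] [Fintype V] (I : Inst V) (hI : I.IsValid)
    (p : V → Option V) (β : V → ℤ)
    (hpop : I.Popular p) (hwit : I.IsWitness p β)
    (h0 : ∀ u, p u = none → β u = 0)
    (h1 : ∀ u, p u ≠ none → β u = 1 ∨ β u = -1) :
    ¬ I.HasAugPath p ∧ I.Dominant p :=
  witness_pm_one_implies_dominant_general I p β hpop hwit h1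

end PopMatch
end

section
/- Let S be any stable matching of the marriage instance G_φ. Then: (1) S leaves s and t unmatched, contains every basic edge, and contains no consistency edge; (2) for every variable x, the gadget of ¬x is either in true state or in false state in S; (3) every gadget of an occurrence of x is either in true state or in false state in S; (4) if the gadget of ¬x is in true state in S, then all gadgets of x are in false state in S. Conversely, every matching of G_φ satisfying (1)–(4) is stable. -/
open scoped Classical

namespace PopMatch

/-- A 3SAT formula: `m` clauses over `n` variables, each clause a nonempty
list of at most three literals (a literal is a variable together with a
polarity, `true` meaning a positive occurrence). -/
structure Formula where
  n : ℕ
  m : ℕ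
  clauses : Fin m → List (Fin n × Bool)
  nonempty : ∀ i, clauses i ≠ []
  three : ∀ i, (clauses i).length ≤ 3

namespace Formula

variable (F : Formula)

/-- The variables of the transformed formula `φ`: `X_1, …, X_{2n}`, where
`X_{n+i}` stands for `¬X_i`. -/
abbrev Var := Fin (2 * F.n)

/-- The transformed variable corresponding to a literal: `X_i ↦ X_i` and
`¬X_i ↦ X_{n+i}`. -/
def tvar (l : Fin F.n × Bool) : F.Var :=
  if l.2 then ⟨l.1.val, by have := l.1.isLt; omega⟩
  else ⟨F.n + l.1.val, by have := l.1.isLt; omega⟩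

/-- The variable `X_k` (for `k < n`). -/
def varFst (k : Fin F.n) : F.Var := ⟨k.val, by have := k.isLt; omega⟩

/-- The variable `X_{n+k}` (for `k < n`). -/
def varSnd (k : Fin F.n) : F.Var := ⟨F.n + k.val, by have := k.isLt; omega⟩

/-- The positive clauses of the transformed formula `φ`:
`C_1, …, C_m` are the original clauses with `¬X_i` replaced by `X_{n+i}`, and
`C_{m+i} = X_i ∨ X_{n+i}` for `1 ≤ i ≤ n`. -/
def posClause (i : Fin (F.m + F.n)) : List F.Var :=
  if h : i.val < F.m then (F.clauses ⟨i.val, h⟩).map F.tvar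
  else [⟨i.val - F.m, by have := i.isLt; omega⟩,
        ⟨F.n + (i.val - F.m), by have := i.isLt; omega⟩]

theorem posClause_length_le (i : Fin (F.m + F.n)) : (F.posClause i).length ≤ 3 := by
  unfold posClause
  split
  · simpa using F.three _
  · simp

theorem posClause_ne_nil (i : Fin (F.m + F.n)) : F.posClause i ≠ [] := by
  unfold posClause
  split
  · simpa using F.nonempty _
  · simp

/-- An assignment satisfies the transformed formula `φ` if every positive
clause `C_i` contains a true variable and every negative clause
`D_{m+n+i} = ¬X_i ∨ ¬X_{n+i}` contains a false one. -/
def Sat (A : F.Var → Bool) : Prop :=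
  (∀ i : Fin (F.m + F.n), ∃ x ∈ F.posClause i, A x = true) ∧
  (∀ k : Fin F.n, A (F.varFst k) = false ∨ A (F.varSnd k) = false)

/-- The index (among `1, …, n`) of the negative clause containing the unique
negated occurrence `¬x` of the variable `x`. -/
def negIdx (x : F.Var) : Fin F.n :=
  if h : x.val < F.n then ⟨x.val, h⟩
  else ⟨x.val - F.n, by have := x.isLt; omega⟩

/-- An occurrence of a (positive) literal: a positive clause index together
with a position inside that clause. -/
def Occ := {q : Fin (F.m + F.n) × Fin 3 // q.2.val < (F.posClause q.1).length}

instance : DecidableEq F.Occ := by unfold Occ; infer_instance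

instance : Fintype F.Occ := by unfold Occ; exact Subtype.fintype _

/-- The variable occurring at the occurrence `o`. -/
def litOf (o : F.Occ) : F.Var := (F.posClause o.1.1).get ⟨o.1.2.val, o.2⟩

/-- The list of all occurrences in the positive clause `i`, in clause order. -/
def occList (i : Fin (F.m + F.n)) : List F.Occ :=
  (List.finRange (F.posClause i).length).map
    (fun j => ⟨(i, ⟨j.val, lt_of_lt_of_le j.isLt (F.posClause_length_le i)⟩), j.isLt⟩)

/-- The list of all occurrences of the variable `x`, in a fixed order. -/
def occsOfVar (x : F.Var) : List F.Occ :=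
  ((List.finRange (F.m + F.n)).map (fun i => F.occList i)).flatten.filter
    (fun o => decide (F.litOf o = x))

end Formula

end PopMatch

namespace PopMatch

open Formula

/-- The vertices of the marriage instance `G_φ`: the vertices `s`, `t`, the
vertices `u_i`, `v_i` for `0 ≤ i ≤ m+2n`, the gadget vertices
`a, b, a', b'` of every occurrence of a (positive) literal, and the gadget
vertices `c, d, c', d'` of the unique negated occurrence of every variable. -/
inductive GV (F : Formula) where
  | s : GV F
  | t : GV F
  | u : Fin (F.m + 2 * F.n + 1) → GV F
  | vv : Fin (F.m + 2 * F.n + 1) → GV F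
  | pa : F.Occ → GV F
  | pb : F.Occ → GV F
  | pa' : F.Occ → GV F
  | pb' : F.Occ → GV F
  | nc : F.Var → GV F
  | nd : F.Var → GV F
  | nc' : F.Var → GV F
  | nd' : F.Var → GV F
  deriving DecidableEq, Fintype

namespace GV

variable {F : Formula}

/-- The preference lists of `G_φ`. -/
def plist (F : Formula) : GV F → List (GV F)
  | .s => [.u ⟨0, by omega⟩]
  | .t => [.vv ⟨F.m + 2 * F.n, by omega⟩]
  | .u i =>
      if h0 : i.val = 0 then [.vv i, .s]
      else if h : i.val ≤ F.m + F.n then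
        (F.occList ⟨i.val - 1, by omega⟩).map GV.pb ++ [.vv i]
      else
        [.vv i,
         .nd (F.varFst ⟨i.val - (F.m + F.n + 1), by have := i.isLt; omega⟩),
         .nd (F.varSnd ⟨i.val - (F.m + F.n + 1), by have := i.isLt; omega⟩)]
  | .vv i =>
      if h0 : i.val = F.m + 2 * F.n then [.u i, .t]
      else if h : i.val < F.m + F.n then
        .u i :: (F.occList ⟨i.val, h⟩).map GV.pa
      else
        [.nc (F.varFst ⟨i.val - (F.m + F.n), by have := i.isLt; omega⟩),
         .nc (F.varSnd ⟨i.val - (F.m + F.n), by have := i.isLt; omega⟩),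
         .u i]
  | .pa o => [.pb o, .nd (F.litOf o),
      .vv ⟨o.1.1.val, by have := o.1.1.isLt; omega⟩, .pb' o]
  | .pa' o => [.pb' o, .pb o]
  | .pb o => [.pa' o, .pa o, .u ⟨o.1.1.val + 1, by have := o.1.1.isLt; omega⟩]
  | .pb' o => [.pa o, .pa' o]
  | .nc x => [.nd x, .nd' x,
      .vv ⟨F.m + F.n + (F.negIdx x).val, by have := (F.negIdx x).isLt; omega⟩]
  | .nc' x => [.nd' x, .nd x]
  | .nd x => .nc' x :: (F.occsOfVar x).map GV.pa ++
      [.u ⟨F.m + F.n + 1 + (F.negIdx x).val, by have := (F.negIdx x).isLt; omega⟩,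
       .nc x]
  | .nd' x => [.nc x, .nc' x]

/-- The bipartition side of a vertex of `G_φ` (`true` = the side of the
`a`-vertices). -/
def side : GV F → Bool
  | .t => true
  | .u _ => true
  | .pa _ => true
  | .pa' _ => true
  | .nc _ => true
  | .nc' _ => true
  | _ => false

end GV

/-- The marriage instance `G_φ` associated with the transformed 3SAT
formula `φ`. -/
def Gphi (F : Formula) : Inst (GV F) :=
  ⟨Finset.univ.filter (fun w => GV.side w = true),
   Finset.univ.filter (fun w => GV.side w = false),
   GV.plist F⟩

variable {F : Formula}

/-- The gadget of the occurrence `o` is in **true state** in the matching `p`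
(it contains the edges `(a_i, b'_i)` and `(a'_i, b_i)`). -/
def PosTrue (p : GV F → Option (GV F)) (o : F.Occ) : Prop :=
  p (GV.pa o) = some (GV.pb' o) ∧ p (GV.pa' o) = some (GV.pb o)

/-- The gadget of the occurrence `o` is in **false state** in the matching `p`
(it contains the edges `(a_i, b_i)` and `(a'_i, b'_i)`). -/
def PosFalse (p : GV F → Option (GV F)) (o : F.Occ) : Prop :=
  p (GV.pa o) = some (GV.pb o) ∧ p (GV.pa' o) = some (GV.pb' o)

/-- The gadget of `¬x` is in **true state** in the matching `p`
(it contains the edges `(c_k, d_k)` and `(c'_k, d'_k)`). -/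
def NegTrue (p : GV F → Option (GV F)) (x : F.Var) : Prop :=
  p (GV.nc x) = some (GV.nd x) ∧ p (GV.nc' x) = some (GV.nd' x)

/-- The gadget of `¬x` is in **false state** in the matching `p`
(it contains the edges `(c_k, d'_k)` and `(c'_k, d_k)`). -/
def NegFalse (p : GV F → Option (GV F)) (x : F.Var) : Prop :=
  p (GV.nc x) = some (GV.nd' x) ∧ p (GV.nc' x) = some (GV.nd x)

end PopMatch


/-!
In a stable matching, an edge whose two ends are not matched to partners they prefer to each
other belongs to the matching (`Inst.Stable.eq_some_of_no_better`). Applied to the edges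
`(a', b')`, `(a', b)`, `(a, b)` of a gadget this forces the gadget into its true or false state;
the same argument works for the gadget of `¬x` as soon as `d` is not matched to `u_k`, which
the basic edge `(u_k, v_k)` guarantees. The basic edges are forced by downward induction: `u_i`
prefers to `v_i` only `b`-vertices, which are busy in their gadgets, and `v_i` prefers to `u_i`
only the `c`-vertices of `D_{i+1}`, which are busy once `(u_{i+1}, v_{i+1})` is matched. A true
gadget of `¬x` together with a true gadget of `x` would make their consistency edge block.

Conversely, blocking is symmetric and `G_φ` is bipartite, so it suffices that no vertex `a` on the
side of the `a`-vertices is wanted back by a vertex it prefers to its partner: every such vertex is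
matched to its first choice, except for the `b`-vertices wanted by `u_i`, which rank `u_i` last.
-/
namespace PopMatch.Inst

variable {V : Type*} {I : Inst V} {p : V → Option V} {u v w : V}

theorem IsMatching.symm (hm : I.IsMatching p) (h : p u = some v) : p v = some u := hm.1 u v h

theorem IsMatching.mem_plist (hm : I.IsMatching p) (h : p u = some v) : v ∈ I.plist u :=
  (hm.2 u v h).1

theorem IsMatching.ne_some_of_eq_some (hm : I.IsMatching p) (h : p v = some w) (hne : w ≠ u) :
    p u ≠ some v :=
  fun h' => hne (Option.some_injective _ (h.symm.trans (hm.symm h')))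

theorem IsMatching.eq_none_of_forall_ne (hm : I.IsMatching p)
    (h : ∀ w ∈ I.plist u, p u ≠ some w) : p u = none :=
  Option.eq_none_iff_forall_ne_some.2 fun w hw => h w (hm.mem_plist hw) hw

variable [DecidableEq V]

def above (I : Inst V) (u v : V) : List V := (I.plist u).take ((I.plist u).idxOf v)

theorem ne_of_mem_above (h : w ∈ I.above u v) : w ≠ v := by
  rintro rfl
  exact lt_irrefl _ ((List.mem_take_iff_idxOf_lt (List.mem_of_mem_take h)).1 h)

theorem IsMatching.prefOver_iff (hm : I.IsMatching p) (hw : p u = some w) :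
    I.PrefOver p u v ↔ v ∈ I.above u w := by
  simp only [PrefOver, pref, above, hw]
  refine ⟨fun ⟨hv, _, h⟩ => (List.mem_take_iff_idxOf_lt hv).2 h, fun h => ?_⟩
  have hv := List.mem_of_mem_take h
  exact ⟨hv, hm.mem_plist hw, (List.mem_take_iff_idxOf_lt hv).1 h⟩

theorem IsMatching.prefOver_of_no_better (hm : I.IsMatching p) (hv : v ∈ I.plist u)
    (hne : p u ≠ some v) (h : ∀ w ∈ I.above u v, p u ≠ some w) : I.PrefOver p u v := by
  cases hw : p u with
  | none => simp [PrefOver, hw]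
  | some w =>
    have hwu := hm.mem_plist hw
    rw [hm.prefOver_iff hw, above, List.mem_take_iff_idxOf_lt hv]
    have hle : ¬ (I.plist u).idxOf w < (I.plist u).idxOf v :=
      fun hlt => h w ((List.mem_take_iff_idxOf_lt hwu).2 hlt) hw
    have hne' : (I.plist u).idxOf w ≠ (I.plist u).idxOf v :=
      fun heq => hne (hw ▸ congrArg some ((List.idxOf_inj hwu).1 heq))
    omega

theorem Stable.eq_some_of_no_better (hs : I.Stable p) (hadj : I.adj u v)
    (hu : ∀ w ∈ I.above u v, p u ≠ some w) (hv : ∀ w ∈ I.above v u, p v ≠ some w) :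
    p u = some v := by
  by_contra h
  exact hs.2 u v ⟨hadj, h, hs.1.prefOver_of_no_better hadj.1 h hu,
    hs.1.prefOver_of_no_better hadj.2 (h ∘ hs.1.symm) hv⟩

end PopMatch.Inst

namespace PopMatch

namespace Formula

variable {F : Formula}

theorem mem_occList {o : F.Occ} {i : Fin (F.m + F.n)} : o ∈ F.occList i ↔ o.1.1 = i := by
  unfold occList
  refine List.mem_map.trans ⟨?_, ?_⟩
  · rintro ⟨j, -, rfl⟩
    rfl
  · rintro rfl
    exact ⟨⟨o.1.2.val, o.2⟩, List.mem_finRange _, rfl⟩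

@[simp]
theorem mem_occsOfVar {o : F.Occ} {x : F.Var} : o ∈ F.occsOfVar x ↔ F.litOf o = x := by
  simp [occsOfVar, mem_occList]

theorem negIdx_varFst (k : Fin F.n) : F.negIdx (F.varFst k) = k := by
  ext; simp [negIdx, varFst]

theorem negIdx_varSnd (k : Fin F.n) : F.negIdx (F.varSnd k) = k := by
  ext; simp [negIdx, varSnd]

/-- The index `k` of the clause `D_k` containing `¬x`: `d_k` ranks `u_k` and `c_k` ranks
`v_{k-1}`. -/
def negClause (x : F.Var) : Fin (F.m + 2 * F.n + 1) :=
  ⟨F.m + F.n + 1 + (F.negIdx x).val, by have := (F.negIdx x).isLt; omega⟩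

end Formula

open GV

variable {F : Formula}

@[simp]
theorem Gphi_plist : (Gphi F).plist = plist F := rfl

theorem adj_u_vv (i : Fin (F.m + 2 * F.n + 1)) : (Gphi F).adj (u i) (vv i) := by
  constructor <;> simp only [Gphi_plist, plist] <;> split_ifs <;> simp

theorem exists_pb_of_mem_above_u {i : Fin (F.m + 2 * F.n + 1)} {w : GV F}
    (h : w ∈ (Gphi F).above (u i) (vv i)) : ∃ o, w = pb o := by
  have hne := Inst.ne_of_mem_above h
  have hmem := List.mem_of_mem_take h
  simp only [Inst.above, Gphi_plist, plist] at h hmem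
  split_ifs at h hmem
  · simp at h
  · simp only [List.mem_append, List.mem_map, List.mem_singleton, hne, or_false] at hmem
    obtain ⟨o, -, rfl⟩ := hmem
    exact ⟨o, rfl⟩
  · simp at h

theorem exists_nc_of_mem_above_vv {i : Fin (F.m + 2 * F.n + 1)} {w : GV F}
    (h : w ∈ (Gphi F).above (vv i) (u i)) :
    ∃ x, w = nc x ∧ (F.negClause x).val = i.val + 1 := by
  simp only [Inst.above, Gphi_plist, plist] at h
  split_ifs at h <;> simp at h
  rcases h with rfl | rfl
  · exact ⟨_, rfl, by simp [Formula.negClause, Formula.negIdx_varFst]; omega⟩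
  · exact ⟨_, rfl, by simp [Formula.negClause, Formula.negIdx_varSnd]; omega⟩

theorem mem_above_nd_nc {x : F.Var} {w : GV F} :
    w ∈ (Gphi F).above (nd x) (nc x) ↔
      w = nc' x ∨ (∃ o, F.litOf o = x ∧ w = pa o) ∨ w = u (F.negClause x) := by
  have hsplit : plist F (nd x) =
      (nc' x :: (F.occsOfVar x).map pa ++ [u (F.negClause x)]) ++ [nc x] := by
    simp [plist, Formula.negClause]
  rw [Inst.above, Gphi_plist, hsplit, List.idxOf_append_of_notMem (by simp),
    List.idxOf_cons_self, add_zero, List.take_left]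
  simp [eq_comm]

variable {p : GV F → Option (GV F)}

theorem posTrue_or_posFalse (hs : (Gphi F).Stable p) (o : F.Occ) :
    PosTrue p o ∨ PosFalse p o := by
  have hm := hs.1
  by_cases ha : p (pb' o) = some (pa o)
  · have hb : p (pa' o) = some (pb o) :=
      hs.eq_some_of_no_better (by simp [Inst.adj, plist])
        (by simpa [Inst.above, plist] using hm.ne_some_of_eq_some ha (by simp))
        (by simp [Inst.above, plist])
    exact .inl ⟨hm.symm ha, hb⟩
  · have hb' : p (pa' o) = some (pb' o) :=
      hs.eq_some_of_no_better (by simp [Inst.adj, plist]) (by simp [Inst.above, plist])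
        (by simpa [Inst.above, plist] using ha)
    have hb : p (pa o) = some (pb o) :=
      hs.eq_some_of_no_better (by simp [Inst.adj, plist]) (by simp [Inst.above, plist])
        (by simpa [Inst.above, plist] using hm.ne_some_of_eq_some hb' (by simp))
    exact .inr ⟨hb, hb'⟩

theorem negTrue_or_negFalse_of_basic_edge (hs : (Gphi F).Stable p) {x : F.Var}
    (hk : p (u (F.negClause x)) = some (vv (F.negClause x))) : NegTrue p x ∨ NegFalse p x := by
  have hm := hs.1
  by_cases hc : p (nd' x) = some (nc x)
  · have hd : p (nc' x) = some (nd x) :=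
      hs.eq_some_of_no_better (by simp [Inst.adj, plist])
        (by simpa [Inst.above, plist] using hm.ne_some_of_eq_some hc (by simp))
        (by simp [Inst.above, plist])
    exact .inr ⟨hm.symm hc, hd⟩
  · have hd' : p (nc' x) = some (nd' x) :=
      hs.eq_some_of_no_better (by simp [Inst.adj, plist]) (by simp [Inst.above, plist])
        (by simpa [Inst.above, plist] using hc)
    have hd : p (nc x) = some (nd x) := by
      refine hs.eq_some_of_no_better (by simp [Inst.adj, plist]) (by simp [Inst.above, plist])
        fun w hw => ?_
      rcases mem_above_nd_nc.1 hw with rfl | ⟨o, -, rfl⟩ | rfl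
      · exact hm.ne_some_of_eq_some hd' (by simp)
      · rcases posTrue_or_posFalse hs o with ⟨h, -⟩ | ⟨h, -⟩ <;>
          exact hm.ne_some_of_eq_some h (by simp)
      · exact hm.ne_some_of_eq_some hk (by simp)
    exact .inl ⟨hd, hd'⟩

theorem u_eq_some_vv (hs : (Gphi F).Stable p) (i : Fin (F.m + 2 * F.n + 1)) :
    p (u i) = some (vv i) := by
  induction i using WellFoundedGT.induction with
  | _ i ih =>
  refine hs.eq_some_of_no_better (adj_u_vv i) (fun w hw => ?_) (fun w hw => ?_)
  · obtain ⟨o, rfl⟩ := exists_pb_of_mem_above_u hw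
    rcases posTrue_or_posFalse hs o with ⟨-, h⟩ | ⟨h, -⟩ <;>
      exact hs.1.ne_some_of_eq_some (hs.1.symm h) (by simp)
  · obtain ⟨x, rfl, hx⟩ := exists_nc_of_mem_above_vv hw
    rcases negTrue_or_negFalse_of_basic_edge hs (ih (F.negClause x) (Fin.lt_def.2 (by omega))) with
      ⟨h, -⟩ | ⟨h, -⟩ <;> exact hs.1.ne_some_of_eq_some h (by simp)

theorem posFalse_of_negTrue (hs : (Gphi F).Stable p) {x : F.Var} (hx : NegTrue p x) {o : F.Occ}
    (ho : F.litOf o = x) : PosFalse p o := by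
  refine (posTrue_or_posFalse hs o).resolve_left fun ho' => ?_
  subst ho
  refine hs.2 (pa o) (nd (F.litOf o)) ⟨by simp [Inst.adj, plist], by simp [ho'.1], ?_, ?_⟩
  · rw [hs.1.prefOver_iff ho'.1]
    simp [Inst.above, plist]
  · rw [hs.1.prefOver_iff (hs.1.symm hx.1), mem_above_nd_nc]
    simp

theorem s_eq_none (hs : (Gphi F).Stable p) : p s = none :=
  hs.1.eq_none_of_forall_ne <| by
    simpa [plist] using hs.1.ne_some_of_eq_some (u_eq_some_vv hs _) (by simp)

theorem t_eq_none (hs : (Gphi F).Stable p) : p t = none :=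
  hs.1.eq_none_of_forall_ne <| by
    simpa [plist] using hs.1.ne_some_of_eq_some (hs.1.symm (u_eq_some_vv hs _)) (by simp)

theorem side_of_mem_plist {a b : GV F} (h : b ∈ plist F a) : side b = !side a := by
  cases a <;> simp only [plist] at h <;> (try split_ifs at h) <;> simp at h <;> aesop

section Converse

variable (hm : (Gphi F).IsMatching p) (hu : ∀ i, p (u i) = some (vv i))
include hm hu

theorem exists_pb_of_prefOver_u {i : Fin (F.m + 2 * F.n + 1)} {w : GV F}
    (h : (Gphi F).PrefOver p (u i) w) : ∃ o, w = pb o :=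
  exists_pb_of_mem_above_u ((hm.prefOver_iff (hu i)).1 h)

theorem exists_nc_of_prefOver_vv {i : Fin (F.m + 2 * F.n + 1)} {w : GV F}
    (h : (Gphi F).PrefOver p (vv i) w) : ∃ x, w = nc x :=
  (exists_nc_of_mem_above_vv ((hm.prefOver_iff (hm.symm (hu i))).1 h)).imp fun _ => And.left

variable (hneg : ∀ x, NegTrue p x ∨ NegFalse p x) (hpos : ∀ o, PosTrue p o ∨ PosFalse p o)
  (himp : ∀ x, NegTrue p x → ∀ o, F.litOf o = x → PosFalse p o)
include hneg hpos himp

theorem not_prefOver_of_prefOver_of_side {a b : GV F} (ha : side a = true) (hb : b ∈ plist F a)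
    (hab : (Gphi F).PrefOver p a b) : ¬ (Gphi F).PrefOver p b a := by
  cases a with
  | t =>
    obtain rfl : b = vv _ := by simpa [plist] using hb
    exact fun hba => (exists_nc_of_prefOver_vv hm hu hba).elim fun _ h => nomatch h
  | u i =>
    obtain ⟨o, rfl⟩ := exists_pb_of_prefOver_u hm hu hab
    rcases hpos o with ⟨-, h⟩ | ⟨h, -⟩ <;>
      simp [hm.prefOver_iff (hm.symm h), Inst.above, plist]
  | pa o =>
    rcases hpos o with ⟨h, h'⟩ | ⟨h, -⟩
    · simp [hm.prefOver_iff h, Inst.above, plist] at hab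
      rcases hab with rfl | rfl | rfl
      · simp [hm.prefOver_iff (hm.symm h'), Inst.above, plist]
      · rcases hneg (F.litOf o) with hx | ⟨-, hx⟩
        · simp [(himp _ hx o rfl).1] at h
        · simp [hm.prefOver_iff (hm.symm hx), Inst.above, plist]
      · exact fun hba => (exists_nc_of_prefOver_vv hm hu hba).elim fun _ h => nomatch h
    · simp [hm.prefOver_iff h, Inst.above, plist] at hab
  | pa' o =>
    rcases hpos o with ⟨h, h'⟩ | ⟨-, h⟩
    · obtain rfl : b = pb' o := by simpa [hm.prefOver_iff h', Inst.above, plist] using hab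
      simp [hm.prefOver_iff (hm.symm h), Inst.above, plist]
    · simp [hm.prefOver_iff h, Inst.above, plist] at hab
  | nc x =>
    rcases hneg x with ⟨h, -⟩ | ⟨h, h'⟩
    · simp [hm.prefOver_iff h, Inst.above, plist] at hab
    · obtain rfl : b = nd x := by simpa [hm.prefOver_iff h, Inst.above, plist] using hab
      simp [hm.prefOver_iff (hm.symm h'), Inst.above, plist]
  | nc' x =>
    rcases hneg x with ⟨-, h⟩ | ⟨h, h'⟩
    · simp [hm.prefOver_iff h, Inst.above, plist] at hab
    · obtain rfl : b = nd' x := by simpa [hm.prefOver_iff h', Inst.above, plist] using hab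
      simp [hm.prefOver_iff (hm.symm h), Inst.above, plist]
  | _ => simp [side] at ha

theorem stable_of_gadget_states : (Gphi F).Stable p := by
  refine ⟨hm, fun a b ⟨hadj, _, hab, hba⟩ => ?_⟩
  cases ha : side a
  · have hb : side b = true := by simp [side_of_mem_plist hadj.1, ha]
    exact not_prefOver_of_prefOver_of_side hm hu hneg hpos himp hb hadj.2 hba hab
  · exact not_prefOver_of_prefOver_of_side hm hu hneg hpos himp ha hadj.1 hab hba

end Converse

end PopMatch

namespace PopMatch

/-- Structure of the stable matchings of `G_φ`: a stable
matching leaves `s` and `t` unmatched, contains every basic edge `(u_i,v_i)`,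
contains no consistency edge, puts every literal gadget in true or false
state, and if the gadget of `¬x` is in true state then all gadgets of `x` are
in false state.  Conversely, every matching satisfying these conditions is
stable. -/
theorem Gphi_stable_characterization (F : Formula)
    (p : GV F → Option (GV F)) :
    ((Gphi F).Stable p →
      ((p GV.s = none ∧ p GV.t = none ∧
        (∀ i, p (GV.u i) = some (GV.vv i)) ∧
        (∀ o : F.Occ, p (GV.pa o) ≠ some (GV.nd (F.litOf o)))) ∧
       (∀ x : F.Var, NegTrue p x ∨ NegFalse p x) ∧
       (∀ o : F.Occ, PosTrue p o ∨ PosFalse p o) ∧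
       (∀ x : F.Var, NegTrue p x →
          ∀ o : F.Occ, F.litOf o = x → PosFalse p o))) ∧
    ((Gphi F).IsMatching p →
      ((p GV.s = none ∧ p GV.t = none ∧
        (∀ i, p (GV.u i) = some (GV.vv i)) ∧
        (∀ o : F.Occ, p (GV.pa o) ≠ some (GV.nd (F.litOf o)))) ∧
       (∀ x : F.Var, NegTrue p x ∨ NegFalse p x) ∧
       (∀ o : F.Occ, PosTrue p o ∨ PosFalse p o) ∧
       (∀ x : F.Var, NegTrue p x →
          ∀ o : F.Occ, F.litOf o = x → PosFalse p o)) →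
      (Gphi F).Stable p) := by
  refine ⟨fun hs => ?_, fun hm ⟨⟨_, _, hu, _⟩, hneg, hpos, himp⟩ =>
    stable_of_gadget_states hm hu hneg hpos himp⟩
  have hu := u_eq_some_vv hs
  refine ⟨⟨s_eq_none hs, t_eq_none hs, hu, fun o => ?_⟩,
    fun x => negTrue_or_negFalse_of_basic_edge hs (hu (F.negClause x)), posTrue_or_posFalse hs,
    fun x hx o ho => posFalse_of_negTrue hs hx ho⟩
  rcases posTrue_or_posFalse hs o with ⟨h, -⟩ | ⟨h, -⟩ <;> simp [h]

end PopMatch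
end

section
/- Let S be any stable matching of the marriage instance Ĝ_φ. Then: (1) S leaves s and t unmatched, contains all edges (u^ℓ_i, v^ℓ_i), and contains no consistency edge; (2) for every variable x, the gadget of ¬x is either in false state or in true state in S; (3) every gadget of an occurrence of x is either in true state or in false state in S; (4) if the gadget of ¬x is in true state in S, then all gadgets of x are in false state in S. Conversely, every matching of Ĝ_φ satisfying (1)–(4) is stable. -/
open scoped Classical

namespace PopMatch

/-- The clauses of the transformed formula: positive ones (`.inl`) and the
negative clauses `D = ¬X_k ∨ ¬X_{n+k}` (`.inr k`). -/
abbrev CIdx (F : Formula) := Fin (F.m + F.n) ⊕ Fin F.n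

/-- The number of literals of a clause. -/
def clen (F : Formula) : CIdx F → ℕ
  | Sum.inl i => (F.posClause i).length
  | Sum.inr _ => 2

/-- Index of a `u`/`v` vertex of `Ĝ_φ`: a clause `ℓ` with `r` literals
together with a position `0 ≤ j ≤ r`. -/
abbrev UVIdx (F : Formula) := Σ ℓ : CIdx F, Fin (clen F ℓ + 1)

/-- The list of all clauses. -/
def allC (F : Formula) : List (CIdx F) :=
  ((List.finRange (F.m + F.n)).map Sum.inl) ++ ((List.finRange F.n).map Sum.inr)

/-- The occurrence given by position `jj` (0-based) of the positive
clause `i`. -/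
def mkOcc (F : Formula) (i : Fin (F.m + F.n)) (jj : ℕ)
    (h : jj < (F.posClause i).length) : F.Occ :=
  ⟨(i, ⟨jj, lt_of_lt_of_le h (F.posClause_length_le i)⟩), h⟩

/-- The vertices of the marriage instance `Ĝ_φ`. -/
inductive HGV (F : Formula) where
  | s : HGV F
  | t : HGV F
  | u : UVIdx F → HGV F
  | vv : UVIdx F → HGV F
  | pa : F.Occ → HGV F
  | pb : F.Occ → HGV F
  | pa' : F.Occ → HGV F
  | pb' : F.Occ → HGV F
  | nc : F.Var → HGV F
  | nd : F.Var → HGV F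
  | nc' : F.Var → HGV F
  | nd' : F.Var → HGV F
  deriving DecidableEq, Fintype

namespace HGV

/-- The preference lists of `Ĝ_φ`. -/
def plist (F : Formula) : HGV F → List (HGV F)
  | .s => (allC F).map (fun ℓ => .u ⟨ℓ, ⟨0, Nat.succ_pos _⟩⟩)
  | .t => (allC F).map (fun ℓ => .vv ⟨ℓ, ⟨clen F ℓ, Nat.lt_succ_self _⟩⟩)
  | .u ⟨Sum.inl i, j⟩ =>
      if h0 : j.val = 0 then [.vv ⟨Sum.inl i, j⟩, .s]
      else
        [.pb (mkOcc F i (j.val - 1)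
            (by have hj := j.isLt; simp only [clen] at hj; omega)),
         .vv ⟨Sum.inl i, j⟩]
  | .u ⟨Sum.inr k, j⟩ =>
      if j.val = 0 then [.vv ⟨Sum.inr k, j⟩, .s]
      else [.vv ⟨Sum.inr k, j⟩,
            .nd (if j.val = 1 then F.varFst k else F.varSnd k)]
  | .vv ⟨Sum.inl i, j⟩ =>
      if h0 : j.val = (F.posClause i).length then [.u ⟨Sum.inl i, j⟩, .t]
      else
        [.u ⟨Sum.inl i, j⟩,
         .pa (mkOcc F i j.val
            (by have hj := j.isLt; simp only [clen] at hj; omega))]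
  | .vv ⟨Sum.inr k, j⟩ =>
      if j.val = 2 then [.u ⟨Sum.inr k, j⟩, .t]
      else [.nc (if j.val = 0 then F.varFst k else F.varSnd k),
            .u ⟨Sum.inr k, j⟩]
  | .pa o =>
      [.pb o,
       .vv ⟨Sum.inl o.1.1, ⟨o.1.2.val, by
          have := o.2; simp only [clen]; omega⟩⟩,
       .pb' o]
  | .pa' o => [.pb' o, .pb o]
  | .pb o =>
      [.pa' o, .nc (F.litOf o), .pa o,
       .u ⟨Sum.inl o.1.1, ⟨o.1.2.val + 1, by
          have := o.2; simp only [clen]; omega⟩⟩]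
  | .pb' o => [.pa o, .pa' o]
  | .nc x =>
      .nd x :: (F.occsOfVar x).map HGV.pb ++
        [.nd' x,
         .vv ⟨Sum.inr (F.negIdx x), ⟨if x.val < F.n then 0 else 1, by
            have : clen F (Sum.inr (F.negIdx x)) = 2 := rfl
            rw [this]; split <;> omega⟩⟩]
  | .nc' x => [.nd' x, .nd x]
  | .nd x =>
      [.nc' x,
       .u ⟨Sum.inr (F.negIdx x), ⟨if x.val < F.n then 1 else 2, by
          have : clen F (Sum.inr (F.negIdx x)) = 2 := rfl
          rw [this]; split <;> omega⟩⟩,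
       .nc x]
  | .nd' x => [.nc x, .nc' x]

/-- The bipartition side of a vertex of `Ĝ_φ`. -/
def side {F : Formula} : HGV F → Bool
  | .t => true
  | .u _ => true
  | .pa _ => true
  | .pa' _ => true
  | .nc _ => true
  | .nc' _ => true
  | _ => false

end HGV

/-- The marriage instance `Ĝ_φ` associated with the transformed 3SAT
formula `φ`. -/
def Ghat (F : Formula) : Inst (HGV F) :=
  ⟨Finset.univ.filter (fun w => HGV.side w = true),
   Finset.univ.filter (fun w => HGV.side w = false),
   HGV.plist F⟩

variable {F : Formula}

/-- The gadget of the occurrence `o` is in **true state** in the matching `p`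
of `Ĝ_φ` (it contains the edges `(a_j, b_j)` and `(a'_j, b'_j)`). -/
def PosTrueH (p : HGV F → Option (HGV F)) (o : F.Occ) : Prop :=
  p (HGV.pa o) = some (HGV.pb o) ∧ p (HGV.pa' o) = some (HGV.pb' o)

/-- The gadget of the occurrence `o` is in **false state** in the matching `p`
of `Ĝ_φ` (it contains the edges `(a_j, b'_j)` and `(a'_j, b_j)`). -/
def PosFalseH (p : HGV F → Option (HGV F)) (o : F.Occ) : Prop :=
  p (HGV.pa o) = some (HGV.pb' o) ∧ p (HGV.pa' o) = some (HGV.pb o)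

/-- The gadget of `¬x` is in **true state** in the matching `p` of `Ĝ_φ`
(it contains the edges `(c_k, d'_k)` and `(c'_k, d_k)`). -/
def NegTrueH (p : HGV F → Option (HGV F)) (x : F.Var) : Prop :=
  p (HGV.nc x) = some (HGV.nd' x) ∧ p (HGV.nc' x) = some (HGV.nd x)

/-- The gadget of `¬x` is in **false state** in the matching `p` of `Ĝ_φ`
(it contains the edges `(c_k, d_k)` and `(c'_k, d'_k)`). -/
def NegFalseH (p : HGV F → Option (HGV F)) (x : F.Var) : Prop :=
  p (HGV.nc x) = some (HGV.nd x) ∧ p (HGV.nc' x) = some (HGV.nd' x)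

end PopMatch

namespace PopMatch


/-!
One observation pins down the stable matchings of `Ĝ_φ`: if `u` is the first choice of `v`, then
in a stable matching `u` is matched to `v` or to someone it prefers to `v`, since otherwise
`(u, v)` blocks. Applied to `a_j` it shows that `b_j` is never matched to `u^ℓ_j`, which gives the
edges `(u^ℓ_j, v^ℓ_j)` of the positive clauses. Applied to `b'_j` and `b_j` it excludes the
consistency edges, so that, applied to `d'_k`, it matches `c_k` to `d_k` or `d'_k`, which gives the
edges `(u^ℓ_j, v^ℓ_j)` of the negative clauses. Applied to `a'_j`, `c'_k` and `d_k` it leaves every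
gadget in one of its two states. A true gadget of `x` and the true gadget of `¬x` would make their
consistency edge block.

Conversely, a vertex matched to its first choice lies on no blocking edge. In a matching of the
described shape, every other edge has such an endpoint, or an endpoint (`b_j` or `c_k` in true
state) that ranks the edge last, below its partner, or it joins a true `b_j` to a true `c_k`, which
(4) forbids.
-/

namespace Inst

variable {V : Type*} {I : Inst V} {p : V → Option V} {u v w : V} {l l₁ l₂ : List V}

theorem IsMatching.eq_of_eq_some (hm : I.IsMatching p) (hu : p u = some v) (hv : p v = some w) :
    u = w :=
  Option.some_injective _ ((hm.1 u v hu).symm.trans hv)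

variable [DecidableEq V]

theorem pref_of_append (h : I.plist u = l₁ ++ l₂) (hw : w ∈ l₁) (hv : v ∉ l₁) (hv₂ : v ∈ l₂) :
    I.pref u w v := by
  refine ⟨h ▸ List.mem_append_left _ hw, h ▸ List.mem_append_right _ hv₂, ?_⟩
  rw [h, List.idxOf_append_of_mem hw, List.idxOf_append_of_notMem hv]
  exact Nat.lt_add_right _ (List.idxOf_lt_length_iff.2 hw)

theorem not_pref_of_append (h : I.plist u = l₁ ++ l₂) (hw : w ∈ l₁) (hv : v ∉ l₁) :
    ¬ I.pref u v w := by
  rintro ⟨-, -, hlt⟩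
  rw [h, List.idxOf_append_of_mem hw, List.idxOf_append_of_notMem hv] at hlt
  have := List.idxOf_lt_length_iff.2 hw
  omega

theorem IsMatching.prefOver_of_append (hm : I.IsMatching p) (h : I.plist u = l₁ ++ l₂)
    (hv : v ∈ l₁) (hpu : ∀ w ∈ l₁, p u ≠ some w) : I.PrefOver p u v := by
  unfold PrefOver
  split
  · trivial
  · next w hpw =>
    have hw : w ∈ l₁ ++ l₂ := h ▸ (hm.2 u w hpw).1
    have hw₁ : w ∉ l₁ := fun hw₁ => hpu w hw₁ hpw
    exact pref_of_append h hv hw₁ ((List.mem_append.1 hw).resolve_left hw₁)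

theorem not_prefOver_of_append (hpu : p u = some w) (h : I.plist u = l₁ ++ l₂) (hw : w ∈ l₁)
    (hv : v ∉ l₁) : ¬ I.PrefOver p u v := by
  simpa only [PrefOver, hpu] using not_pref_of_append h hw hv

theorem not_prefOver_of_cons (hpu : p u = some w) (h : I.plist u = w :: l) :
    ¬ I.PrefOver p u v := by
  simp only [PrefOver, hpu, pref, h, List.idxOf_cons_self]
  omega

theorem not_blocks_of_cons (hpu : p u = some w) (h : I.plist u = w :: l) :
    ¬ I.Blocks p u v :=
  fun hb => not_prefOver_of_cons hpu h hb.2.2.1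

theorem Stable.partner_mem_of_cons (hs : I.Stable p) (hv : I.plist v = u :: l)
    (hu : I.plist u = l₁ ++ v :: l₂) : ∃ w ∈ l₁ ++ [v], p u = some w := by
  by_contra! hne
  have hu' : I.plist u = (l₁ ++ [v]) ++ l₂ := by simpa using hu
  refine hs.2 u v ⟨⟨by simp [hu], by simp [hv]⟩, hne v (by simp), ?_, ?_⟩
  · exact IsMatching.prefOver_of_append hs.1 hu' (by simp) hne
  · refine IsMatching.prefOver_of_append hs.1 (l₁ := [u]) hv (by simp) ?_
    simpa using fun h => hne v (by simp) (hs.1.1 v u h)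

theorem Stable.partner_eq_of_cons (hs : I.Stable p) (hv : I.plist v = u :: l)
    (hu : I.plist u = v :: l₂) : p u = some v := by
  simpa using hs.partner_mem_of_cons hv (l₁ := []) hu

theorem Stable.partner_eq_or_of_cons (hs : I.Stable p) (hv : I.plist v = u :: l)
    (hu : I.plist u = w :: v :: l₂) : p u = some w ∨ p u = some v := by
  simpa using hs.partner_mem_of_cons hv (l₁ := [w]) hu

end Inst

open Inst

namespace HGV

variable {F : Formula}

/-- For the `j`-th literal `o` of the positive clause `ℓ`, `posV o = v^ℓ_{j-1}` and
`posU o = u^ℓ_j`; for the literal `¬x` at position `k` of the negative clause `ℓ'`,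
`negV x = v^{ℓ'}_{k-1}` and `negU x = u^{ℓ'}_k`. -/
def posV (o : F.Occ) : HGV F :=
  .vv ⟨Sum.inl o.1.1, ⟨o.1.2.val, by have := o.2; simp only [clen]; omega⟩⟩

def posU (o : F.Occ) : HGV F :=
  .u ⟨Sum.inl o.1.1, ⟨o.1.2.val + 1, by have := o.2; simp only [clen]; omega⟩⟩

def negV (x : F.Var) : HGV F :=
  .vv ⟨Sum.inr (F.negIdx x), ⟨if x.val < F.n then 0 else 1, by
    change _ < 2 + 1; split <;> omega⟩⟩

def negU (x : F.Var) : HGV F :=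
  .u ⟨Sum.inr (F.negIdx x), ⟨if x.val < F.n then 1 else 2, by
    change _ < 2 + 1; split <;> omega⟩⟩

end HGV

open HGV

section

variable {F : Formula} {p : HGV F → Option (HGV F)}

theorem plist_pa (o : F.Occ) : (Ghat F).plist (.pa o) = [.pb o, posV o, .pb' o] := rfl

theorem plist_pa' (o : F.Occ) : (Ghat F).plist (.pa' o) = [.pb' o, .pb o] := rfl

theorem plist_pb (o : F.Occ) :
    (Ghat F).plist (.pb o) = [.pa' o, .nc (F.litOf o), .pa o, posU o] := rfl

theorem plist_pb' (o : F.Occ) : (Ghat F).plist (.pb' o) = [.pa o, .pa' o] := rfl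

theorem plist_nc (x : F.Var) :
    (Ghat F).plist (.nc x) = (.nd x :: (F.occsOfVar x).map pb) ++ [.nd' x, negV x] := rfl

theorem plist_nc_eq_append (x : F.Var) :
    (Ghat F).plist (.nc x) = (.nd x :: (F.occsOfVar x).map pb ++ [.nd' x]) ++ [negV x] := by
  simp [plist_nc]

theorem plist_nc' (x : F.Var) : (Ghat F).plist (.nc' x) = [.nd' x, .nd x] := rfl

theorem plist_nd (x : F.Var) : (Ghat F).plist (.nd x) = [.nc' x, negU x, .nc x] := rfl

theorem plist_nd' (x : F.Var) : (Ghat F).plist (.nd' x) = [.nc x, .nc' x] := rfl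

theorem mem_plist_s {v : HGV F} (hv : v ∈ (Ghat F).plist .s) :
    ∃ ℓ, v = .u ⟨ℓ, ⟨0, Nat.succ_pos _⟩⟩ := by
  obtain ⟨ℓ, -, rfl⟩ := List.mem_map.1 hv
  exact ⟨ℓ, rfl⟩

theorem mem_plist_t {v : HGV F} (hv : v ∈ (Ghat F).plist .t) :
    ∃ ℓ, v = .vv ⟨ℓ, ⟨clen F ℓ, Nat.lt_succ_self _⟩⟩ := by
  obtain ⟨ℓ, -, rfl⟩ := List.mem_map.1 hv
  exact ⟨ℓ, rfl⟩

theorem plist_u_zero (ℓ : CIdx F) :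
    (Ghat F).plist (.u ⟨ℓ, ⟨0, Nat.succ_pos _⟩⟩) = [.vv ⟨ℓ, ⟨0, Nat.succ_pos _⟩⟩, .s] := by
  rcases ℓ with i | k <;> rfl

theorem plist_vv_last (ℓ : CIdx F) :
    (Ghat F).plist (.vv ⟨ℓ, ⟨clen F ℓ, Nat.lt_succ_self _⟩⟩) =
      [.u ⟨ℓ, ⟨clen F ℓ, Nat.lt_succ_self _⟩⟩, .t] := by
  rcases ℓ with i | k
  · exact dif_pos rfl
  · rfl

theorem plist_u_inl (i : Fin (F.m + F.n)) (j : Fin (clen F (.inl i) + 1)) :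
    (Ghat F).plist (.u ⟨.inl i, j⟩) = [.vv ⟨.inl i, j⟩, .s] ∨
      ∃ o, (Ghat F).plist (.u ⟨.inl i, j⟩) = [.pb o, .vv ⟨.inl i, j⟩] := by
  by_cases h : j.val = 0
  · exact Or.inl (dif_pos h)
  · exact Or.inr ⟨_, dif_neg h⟩

theorem plist_vv_inl (i : Fin (F.m + F.n)) (j : Fin (clen F (.inl i) + 1)) :
    ∃ l, (Ghat F).plist (.vv ⟨.inl i, j⟩) = .u ⟨.inl i, j⟩ :: l := by
  by_cases h : j.val = (F.posClause i).length
  · exact ⟨_, dif_pos h⟩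
  · exact ⟨_, dif_neg h⟩

theorem plist_u_inr (k : Fin F.n) (j : Fin (clen F (.inr k) + 1)) :
    ∃ l, (Ghat F).plist (.u ⟨.inr k, j⟩) = .vv ⟨.inr k, j⟩ :: l := by
  by_cases h : j.val = 0
  · exact ⟨_, if_pos h⟩
  · exact ⟨_, if_neg h⟩

theorem plist_vv_inr (k : Fin F.n) (j : Fin (clen F (.inr k) + 1)) :
    (Ghat F).plist (.vv ⟨.inr k, j⟩) = [.u ⟨.inr k, j⟩, .t] ∨
      ∃ x, (Ghat F).plist (.vv ⟨.inr k, j⟩) = [.nc x, .u ⟨.inr k, j⟩] := by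
  by_cases h : j.val = 2
  · exact Or.inl (if_pos h)
  · exact Or.inr ⟨_, if_neg h⟩

theorem litOf_of_mem_occsOfVar {x : F.Var} {o : F.Occ} (h : o ∈ F.occsOfVar x) :
    F.litOf o = x := by
  simpa using (List.mem_filter.1 h).2

theorem mem_occsOfVar (o : F.Occ) : o ∈ F.occsOfVar (F.litOf o) := by
  refine List.mem_filter.2 ⟨List.mem_flatten.2 ⟨F.occList o.1.1, List.mem_map.2
    ⟨o.1.1, List.mem_finRange _, rfl⟩, List.mem_map.2 ⟨⟨o.1.2.val, o.2⟩, List.mem_finRange _, rfl⟩⟩,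
    by simp⟩

namespace Inst.Stable

theorem pb_partner (hs : (Ghat F).Stable p) (o : F.Occ) :
    p (.pb o) = some (.pa' o) ∨ p (.pb o) = some (.nc (F.litOf o)) ∨
      p (.pb o) = some (.pa o) := by
  simpa using hs.partner_mem_of_cons (plist_pa o) (l₁ := [pa' o, nc (F.litOf o)]) (plist_pb o)

theorem u_partner_inl (hs : (Ghat F).Stable p) (i : Fin (F.m + F.n))
    (j : Fin (clen F (.inl i) + 1)) : p (.u ⟨.inl i, j⟩) = some (.vv ⟨.inl i, j⟩) := by
  obtain ⟨l, hv⟩ := plist_vv_inl i j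
  rcases plist_u_inl i j with hu | ⟨o, hu⟩
  · exact hs.partner_eq_of_cons hv hu
  · refine (hs.partner_eq_or_of_cons hv hu).resolve_left fun hb => ?_
    rcases hs.pb_partner o with h' | h' | h' <;> cases IsMatching.eq_of_eq_some hs.1 hb h'

theorem pa_partner (hs : (Ghat F).Stable p) (o : F.Occ) :
    p (.pa o) = some (.pb o) ∨ p (.pa o) = some (.pb' o) := by
  obtain h | h | h : p (.pa o) = some (.pb o) ∨ p (.pa o) = some (posV o) ∨
      p (.pa o) = some (.pb' o) := by
    simpa using hs.partner_mem_of_cons (plist_pb' o) (l₁ := [pb o, posV o]) (plist_pa o)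
  · exact Or.inl h
  · cases IsMatching.eq_of_eq_some hs.1 h (hs.1.1 _ _ (hs.u_partner_inl _ _))
  · exact Or.inr h

theorem pb_ne_nc (hs : (Ghat F).Stable p) (o : F.Occ) (x : F.Var) :
    p (.pb o) ≠ some (.nc x) := by
  intro hb
  rcases hs.pa_partner o with ha | ha
  · cases IsMatching.eq_of_eq_some hs.1 ha hb
  · rcases hs.partner_eq_or_of_cons (plist_pb o) (plist_pa' o) with h | h
    · cases IsMatching.eq_of_eq_some hs.1 h (hs.1.1 _ _ ha)
    · cases IsMatching.eq_of_eq_some hs.1 h hb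

theorem nc_partner (hs : (Ghat F).Stable p) (x : F.Var) :
    p (.nc x) = some (.nd x) ∨ p (.nc x) = some (.nd' x) := by
  obtain ⟨w, hw, hpw⟩ := hs.partner_mem_of_cons (plist_nd' x)
    (l₁ := nd x :: (F.occsOfVar x).map pb) (plist_nc x)
  simp only [List.cons_append, List.mem_cons, List.mem_append, List.mem_map, List.not_mem_nil,
    or_false] at hw
  rcases hw with rfl | ⟨o, -, rfl⟩ | rfl
  · exact Or.inl hpw
  · exact absurd (hs.1.1 _ _ hpw) (hs.pb_ne_nc o x)
  · exact Or.inr hpw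

theorem u_partner_inr (hs : (Ghat F).Stable p) (k : Fin F.n) (j : Fin (clen F (.inr k) + 1)) :
    p (.u ⟨.inr k, j⟩) = some (.vv ⟨.inr k, j⟩) := by
  obtain ⟨l, hu⟩ := plist_u_inr k j
  refine hs.1.1 _ _ ?_
  rcases plist_vv_inr k j with hv | ⟨x, hv⟩
  · exact hs.partner_eq_of_cons hu hv
  · refine (hs.partner_eq_or_of_cons hu hv).resolve_left fun hc => ?_
    rcases hs.nc_partner x with h' | h' <;> cases IsMatching.eq_of_eq_some hs.1 hc h'

theorem u_partner (hs : (Ghat F).Stable p) (q : UVIdx F) : p (.u q) = some (.vv q) := by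
  obtain ⟨i | k, j⟩ := q
  · exact hs.u_partner_inl i j
  · exact hs.u_partner_inr k j

theorem s_eq_none (hs : (Ghat F).Stable p) : p .s = none := by
  refine Option.eq_none_iff_forall_ne_some.2 fun w hw => ?_
  obtain ⟨ℓ, rfl⟩ := mem_plist_s (hs.1.2 _ _ hw).1
  cases IsMatching.eq_of_eq_some hs.1 hw (hs.u_partner _)

theorem t_eq_none (hs : (Ghat F).Stable p) : p .t = none := by
  refine Option.eq_none_iff_forall_ne_some.2 fun w hw => ?_
  obtain ⟨ℓ, rfl⟩ := mem_plist_t (hs.1.2 _ _ hw).1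
  cases IsMatching.eq_of_eq_some hs.1 hw (hs.1.1 _ _ (hs.u_partner _))

theorem neg_state (hs : (Ghat F).Stable p) (x : F.Var) : NegFalseH p x ∨ NegTrueH p x := by
  rcases hs.nc_partner x with hc | hc
  · rcases hs.partner_eq_or_of_cons (plist_nc' x) (plist_nd' x) with h | h
    · cases IsMatching.eq_of_eq_some hs.1 h hc
    · exact Or.inl ⟨hc, hs.1.1 _ _ h⟩
  · rcases hs.partner_eq_or_of_cons (plist_nd x) (plist_nc' x) with h | h
    · cases IsMatching.eq_of_eq_some hs.1 h (hs.1.1 _ _ hc)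
    · exact Or.inr ⟨hc, h⟩

theorem pos_state (hs : (Ghat F).Stable p) (o : F.Occ) : PosTrueH p o ∨ PosFalseH p o := by
  rcases hs.pb_partner o with hb | hb | hb
  · refine Or.inr ⟨(hs.pa_partner o).resolve_left fun ha => ?_, hs.1.1 _ _ hb⟩
    cases IsMatching.eq_of_eq_some hs.1 ha hb
  · exact absurd hb (hs.pb_ne_nc o _)
  · rcases hs.partner_eq_or_of_cons (plist_pa' o) (plist_pb' o) with h | h
    · cases IsMatching.eq_of_eq_some hs.1 h (hs.1.1 _ _ hb)
    · exact Or.inl ⟨hs.1.1 _ _ hb, hs.1.1 _ _ h⟩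

theorem posFalse_of_negTrue (hs : (Ghat F).Stable p) {x : F.Var} (hx : NegTrueH p x)
    {o : F.Occ} (ho : F.litOf o = x) : PosFalseH p o := by
  refine (hs.pos_state o).resolve_left fun hT => hs.2 (.pb o) (.nc x) ⟨⟨?_, ?_⟩, ?_, ?_, ?_⟩
  · simp [plist_pb, ho]
  · simp [plist_nc, ← ho, mem_occsOfVar]
  · simp [hs.1.1 _ _ hT.1]
  · exact IsMatching.prefOver_of_append hs.1 (l₁ := [pa' o, nc x]) (by rw [plist_pb, ho]; rfl)
      (by simp) (by simp [hs.1.1 _ _ hT.1])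
  · exact IsMatching.prefOver_of_append hs.1 (plist_nc x) (by simp [← ho, mem_occsOfVar])
      (by simp [hx.1])

end Inst.Stable

structure StableForm (p : HGV F → Option (HGV F)) : Prop where
  u_partner : ∀ q : UVIdx F, p (.u q) = some (.vv q)
  neg_state : ∀ x : F.Var, NegFalseH p x ∨ NegTrueH p x
  pos_state : ∀ o : F.Occ, PosTrueH p o ∨ PosFalseH p o
  posFalse_of_negTrue : ∀ x : F.Var, NegTrueH p x → ∀ o : F.Occ, F.litOf o = x → PosFalseH p o

namespace StableForm

theorem not_blocks_s (hc : StableForm p) (v : HGV F) : ¬ (Ghat F).Blocks p .s v := by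
  rintro ⟨⟨hv, -⟩, -, -, hvs⟩
  obtain ⟨ℓ, rfl⟩ := mem_plist_s hv
  exact not_prefOver_of_cons (hc.u_partner _) (plist_u_zero ℓ) hvs

theorem not_blocks_t (hc : StableForm p) (hm : (Ghat F).IsMatching p) (v : HGV F) :
    ¬ (Ghat F).Blocks p .t v := by
  rintro ⟨⟨hv, -⟩, -, -, hvt⟩
  obtain ⟨ℓ, rfl⟩ := mem_plist_t hv
  exact not_prefOver_of_cons (hm.1 _ _ (hc.u_partner _)) (plist_vv_last ℓ) hvt

theorem not_blocks_u (hc : StableForm p) (hm : (Ghat F).IsMatching p) (q : UVIdx F)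
    (v : HGV F) : ¬ (Ghat F).Blocks p (.u q) v := by
  obtain ⟨i | k, j⟩ := q
  · rcases plist_u_inl i j with hu | ⟨o, hu⟩
    · exact not_blocks_of_cons (hc.u_partner _) hu
    rintro ⟨⟨hv, -⟩, hne, -, hvu⟩
    rw [hu] at hv
    simp only [List.mem_cons, List.not_mem_nil, or_false] at hv
    rcases hv with rfl | rfl
    · rcases hc.pos_state o with hT | hF
      · exact not_prefOver_of_append (hm.1 _ _ hT.1) (l₁ := [pa' o, nc _, pa o]) (plist_pb o)
          (by simp) (by simp) hvu
      · exact not_prefOver_of_cons (hm.1 _ _ hF.2) (plist_pb o) hvu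
    · exact hne (hc.u_partner _)
  · obtain ⟨l, hu⟩ := plist_u_inr k j
    exact not_blocks_of_cons (hc.u_partner _) hu

theorem not_blocks_vv (hc : StableForm p) (hm : (Ghat F).IsMatching p) (q : UVIdx F)
    (v : HGV F) : ¬ (Ghat F).Blocks p (.vv q) v := by
  obtain ⟨i | k, j⟩ := q
  · obtain ⟨l, hv⟩ := plist_vv_inl i j
    exact not_blocks_of_cons (hm.1 _ _ (hc.u_partner _)) hv
  rcases plist_vv_inr k j with hv | ⟨x, hv⟩
  · exact not_blocks_of_cons (hm.1 _ _ (hc.u_partner _)) hv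
  rintro ⟨⟨hw, -⟩, hne, -, hwv⟩
  rw [hv] at hw
  simp only [List.mem_cons, List.not_mem_nil, or_false] at hw
  rcases hw with rfl | rfl
  · rcases hc.neg_state x with hF | hT
    · exact not_prefOver_of_cons hF.1 (plist_nc x) hwv
    · exact not_prefOver_of_append hT.1 (plist_nc_eq_append x) (by simp) (by simp) hwv
  · exact hne (hm.1 _ _ (hc.u_partner _))

theorem not_blocks_pa (hc : StableForm p) (hm : (Ghat F).IsMatching p) (o : F.Occ)
    (v : HGV F) : ¬ (Ghat F).Blocks p (.pa o) v := by
  rcases hc.pos_state o with hT | hF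
  · exact not_blocks_of_cons hT.1 (plist_pa o)
  rintro ⟨⟨hv, -⟩, hne, -, hva⟩
  simp only [plist_pa, List.mem_cons, List.not_mem_nil, or_false] at hv
  rcases hv with rfl | rfl | rfl
  · exact not_prefOver_of_cons (hm.1 _ _ hF.2) (plist_pb o) hva
  · obtain ⟨l, hl⟩ := plist_vv_inl _ _
    exact not_prefOver_of_cons (hm.1 _ _ (hc.u_partner _)) hl hva
  · exact hne hF.1

theorem not_blocks_pa' (hc : StableForm p) (hm : (Ghat F).IsMatching p) (o : F.Occ)
    (v : HGV F) : ¬ (Ghat F).Blocks p (.pa' o) v := by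
  rcases hc.pos_state o with hT | hF
  · exact not_blocks_of_cons hT.2 (plist_pa' o)
  rintro ⟨⟨hv, -⟩, hne, -, hva⟩
  simp only [plist_pa', List.mem_cons, List.not_mem_nil, or_false] at hv
  rcases hv with rfl | rfl
  · exact not_prefOver_of_cons (hm.1 _ _ hF.1) (plist_pb' o) hva
  · exact hne hF.2

theorem not_blocks_pb (hc : StableForm p) (hm : (Ghat F).IsMatching p) (o : F.Occ)
    (v : HGV F) : ¬ (Ghat F).Blocks p (.pb o) v := by
  rcases hc.pos_state o with hT | hF
  swap
  · exact not_blocks_of_cons (hm.1 _ _ hF.2) (plist_pb o)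
  rintro ⟨⟨hv, -⟩, hne, hbv, hvb⟩
  simp only [plist_pb, List.mem_cons, List.not_mem_nil, or_false] at hv
  rcases hv with rfl | rfl | rfl | rfl
  · exact not_prefOver_of_cons hT.2 (plist_pa' o) hvb
  · rcases hc.neg_state (F.litOf o) with hNF | hNT
    · exact not_prefOver_of_cons hNF.1 (plist_nc _) hvb
    · have := (hc.posFalse_of_negTrue _ hNT o rfl).1
      simp [hT.1] at this
  · exact hne (hm.1 _ _ hT.1)
  · exact not_prefOver_of_append (hm.1 _ _ hT.1) (l₁ := [pa' o, nc _, pa o]) (plist_pb o)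
      (by simp) (by simp [posU]) hbv

theorem not_blocks_pb' (hc : StableForm p) (hm : (Ghat F).IsMatching p) (o : F.Occ)
    (v : HGV F) : ¬ (Ghat F).Blocks p (.pb' o) v := by
  rcases hc.pos_state o with hT | hF
  swap
  · exact not_blocks_of_cons (hm.1 _ _ hF.1) (plist_pb' o)
  rintro ⟨⟨hv, -⟩, hne, -, hvb⟩
  simp only [plist_pb', List.mem_cons, List.not_mem_nil, or_false] at hv
  rcases hv with rfl | rfl
  · exact not_prefOver_of_cons hT.1 (plist_pa o) hvb
  · exact hne (hm.1 _ _ hT.2)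

theorem not_blocks_nc (hc : StableForm p) (hm : (Ghat F).IsMatching p) (x : F.Var)
    (v : HGV F) : ¬ (Ghat F).Blocks p (.nc x) v := by
  rcases hc.neg_state x with hF | hT
  · exact not_blocks_of_cons hF.1 (plist_nc x)
  rintro ⟨⟨hv, -⟩, hne, hcv, hvc⟩
  simp only [plist_nc, List.cons_append, List.mem_cons, List.mem_append, List.mem_map,
    List.not_mem_nil, or_false] at hv
  rcases hv with rfl | ⟨o, ho, rfl⟩ | rfl | rfl
  · exact not_prefOver_of_cons (hm.1 _ _ hT.2) (plist_nd x) hvc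
  · have hF := hc.posFalse_of_negTrue x hT o (litOf_of_mem_occsOfVar ho)
    exact not_prefOver_of_cons (hm.1 _ _ hF.2) (plist_pb o) hvc
  · exact hne hT.1
  · exact not_prefOver_of_append hT.1 (plist_nc_eq_append x) (by simp) (by simp [negV]) hcv

theorem not_blocks_nc' (hc : StableForm p) (hm : (Ghat F).IsMatching p) (x : F.Var)
    (v : HGV F) : ¬ (Ghat F).Blocks p (.nc' x) v := by
  rcases hc.neg_state x with hF | hT
  · exact not_blocks_of_cons hF.2 (plist_nc' x)
  rintro ⟨⟨hv, -⟩, hne, -, hvc⟩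
  simp only [plist_nc', List.mem_cons, List.not_mem_nil, or_false] at hv
  rcases hv with rfl | rfl
  · exact not_prefOver_of_cons (hm.1 _ _ hT.1) (plist_nd' x) hvc
  · exact hne hT.2

theorem not_blocks_nd (hc : StableForm p) (hm : (Ghat F).IsMatching p) (x : F.Var)
    (v : HGV F) : ¬ (Ghat F).Blocks p (.nd x) v := by
  rcases hc.neg_state x with hF | hT
  swap
  · exact not_blocks_of_cons (hm.1 _ _ hT.2) (plist_nd x)
  rintro ⟨⟨hv, -⟩, hne, -, hvd⟩
  simp only [plist_nd, List.mem_cons, List.not_mem_nil, or_false] at hv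
  rcases hv with rfl | rfl | rfl
  · exact not_prefOver_of_cons hF.2 (plist_nc' x) hvd
  · obtain ⟨l, hl⟩ := plist_u_inr _ _
    exact not_prefOver_of_cons (hc.u_partner _) hl hvd
  · exact hne (hm.1 _ _ hF.1)

theorem not_blocks_nd' (hc : StableForm p) (hm : (Ghat F).IsMatching p) (x : F.Var)
    (v : HGV F) : ¬ (Ghat F).Blocks p (.nd' x) v := by
  rcases hc.neg_state x with hF | hT
  swap
  · exact not_blocks_of_cons (hm.1 _ _ hT.1) (plist_nd' x)
  rintro ⟨⟨hv, -⟩, hne, -, hvd⟩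
  simp only [plist_nd', List.mem_cons, List.not_mem_nil, or_false] at hv
  rcases hv with rfl | rfl
  · exact not_prefOver_of_cons hF.1 (plist_nc x) hvd
  · exact hne (hm.1 _ _ hF.2)

theorem stable (hc : StableForm p) (hm : (Ghat F).IsMatching p) : (Ghat F).Stable p := by
  refine ⟨hm, fun u v => ?_⟩
  cases u with
  | s => exact hc.not_blocks_s v
  | t => exact hc.not_blocks_t hm v
  | u q => exact hc.not_blocks_u hm q v
  | vv q => exact hc.not_blocks_vv hm q v
  | pa o => exact hc.not_blocks_pa hm o v
  | pb o => exact hc.not_blocks_pb hm o v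
  | pa' o => exact hc.not_blocks_pa' hm o v
  | pb' o => exact hc.not_blocks_pb' hm o v
  | nc x => exact hc.not_blocks_nc hm x v
  | nd x => exact hc.not_blocks_nd hm x v
  | nc' x => exact hc.not_blocks_nc' hm x v
  | nd' x => exact hc.not_blocks_nd' hm x v

end StableForm

end

/-- Structure of the stable matchings of `Ĝ_φ`: a stable
matching leaves `s` and `t` unmatched, contains all edges `(u^ℓ_i, v^ℓ_i)`,
contains no consistency edge, puts every literal gadget in true or false
state, and if the gadget of `¬x` is in true state then all gadgets of `x` are
in false state.  Conversely, every matching satisfying these conditions is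
stable. -/
theorem Ghat_stable_characterization (F : Formula)
    (p : HGV F → Option (HGV F)) :
    ((Ghat F).Stable p →
      ((p HGV.s = none ∧ p HGV.t = none ∧
        (∀ q : UVIdx F, p (HGV.u q) = some (HGV.vv q)) ∧
        (∀ o : F.Occ, p (HGV.pb o) ≠ some (HGV.nc (F.litOf o)))) ∧
       (∀ x : F.Var, NegFalseH p x ∨ NegTrueH p x) ∧
       (∀ o : F.Occ, PosTrueH p o ∨ PosFalseH p o) ∧
       (∀ x : F.Var, NegTrueH p x →
          ∀ o : F.Occ, F.litOf o = x → PosFalseH p o))) ∧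
    ((Ghat F).IsMatching p →
      ((p HGV.s = none ∧ p HGV.t = none ∧
        (∀ q : UVIdx F, p (HGV.u q) = some (HGV.vv q)) ∧
        (∀ o : F.Occ, p (HGV.pb o) ≠ some (HGV.nc (F.litOf o)))) ∧
       (∀ x : F.Var, NegFalseH p x ∨ NegTrueH p x) ∧
       (∀ o : F.Occ, PosTrueH p o ∨ PosFalseH p o) ∧
       (∀ x : F.Var, NegTrueH p x →
          ∀ o : F.Occ, F.litOf o = x → PosFalseH p o)) →
      (Ghat F).Stable p) := by
  refine ⟨fun hs => ⟨⟨hs.s_eq_none, hs.t_eq_none, hs.u_partner, fun o => hs.pb_ne_nc o _⟩,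
    hs.neg_state, hs.pos_state, fun _ hx _ ho => hs.posFalse_of_negTrue hx ho⟩, ?_⟩
  rintro hm ⟨⟨-, -, hU, -⟩, hN, hP, h4⟩
  exact StableForm.stable ⟨hU, hN, hP, h4⟩ hm

end PopMatch
end
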